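/- arXiv:1506.08275 — 2 statements merged into one kernel-verified Lean document; each statement's English description precedes it below -/
import Mathlib

section
/- Let φ ∈ Σ_r ⊗ Δ_n be a partially pure spinor (with respect to the standard basis (f_1,…,f_r) of ℝ^r), let A = (α_{ij}) ∈ SO(r), and set f_i' := ∑_{j=1}^r α_{ij} f_j. Define η'_{kl}^φ(X,Y) := Re⟨(X∧Y)·f_k' f_l'·φ, φ⟩. Then for all 1 ≤ k < l ≤ r: (η'_{kl}^φ + f_k' f_l')·φ = 0 and ⟨f_k' f_l'·φ, φ⟩ = 0; and if r = 4, also ⟨f_1' f_2' f_3' f_4'·φ, φ⟩ = 0. Hence the notion of partially pure spinor does not depend on the choice of oriented orthonormal basis of ℝ^r. -/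
open Complex Matrix
noncomputable section
abbrev Rn (n : ℕ) := EuclideanSpace ℝ (Fin n)
abbrev SpIdx (n : ℕ) : Type := Fin (n / 2) → Fin 2
abbrev Spinor (n : ℕ) := EuclideanSpace ℂ (SpIdx n)
abbrev TwSpinor (r n : ℕ) := EuclideanSpace ℂ (SpIdx r × SpIdx n)

def g1M : Matrix (Fin 2) (Fin 2) ℂ := !![I, 0; 0, -I]
def g2M : Matrix (Fin 2) (Fin 2) ℂ := !![0, I; I, 0]
def TM : Matrix (Fin 2) (Fin 2) ℂ := !![0, -I; I, 0]

def tensorOp {k : ℕ} (M : Fin k → Matrix (Fin 2) (Fin 2) ℂ) :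
    Matrix (Fin k → Fin 2) (Fin k → Fin 2) ℂ :=
  Matrix.of fun x y => ∏ t, M t (x t) (y t)

def genMat (n : ℕ) (i : ℕ) : Matrix (SpIdx n) (SpIdx n) ℂ :=
  if i < 2 * (n / 2) then
    tensorOp (fun t =>
      if (t : ℕ) < n / 2 - 1 - i / 2 then 1
      else if (t : ℕ) = n / 2 - 1 - i / 2 then (if i % 2 = 0 then g1M else g2M)
      else TM)
  else I • tensorOp (fun _ => TM)

def vecMat (n : ℕ) (X : Rn n) : Matrix (SpIdx n) (SpIdx n) ℂ :=
  ∑ i : Fin n, (X i : ℂ) • genMat n (i : ℕ)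

def volMat (n : ℕ) : Matrix (SpIdx n) (SpIdx n) ℂ :=
  ((List.range n).map (genMat n)).prod

def actN {r n : ℕ} (M : Matrix (SpIdx n) (SpIdx n) ℂ) (φ : TwSpinor r n) : TwSpinor r n :=
  WithLp.toLp 2 (fun p : SpIdx r × SpIdx n => ∑ b, M p.2 b * φ (p.1, b))

def actR {r n : ℕ} (M : Matrix (SpIdx r) (SpIdx r) ℂ) (φ : TwSpinor r n) : TwSpinor r n :=
  WithLp.toLp 2 (fun p : SpIdx r × SpIdx n => ∑ a, M p.1 a * φ (a, p.2))

def wedgeMat (n : ℕ) (X Y : Rn n) : Matrix (SpIdx n) (SpIdx n) ℂ :=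
  vecMat n X * vecMat n Y + (((inner ℝ X Y : ℝ) : ℂ)) • 1

def etaM (r n : ℕ) (M : Matrix (SpIdx r) (SpIdx r) ℂ) (φ : TwSpinor r n) (X Y : Rn n) : ℝ :=
  ((inner ℂ (actN (wedgeMat n X Y) (actR M φ)) φ : ℂ)).re

def eta (r n : ℕ) (φ : TwSpinor r n) (k l : ℕ) (X Y : Rn n) : ℝ :=
  etaM r n (genMat r k * genMat r l) φ X Y

def stdBasis (n : ℕ) (i : Fin n) : Rn n := EuclideanSpace.single i 1

def etaActionM (r n : ℕ) (M : Matrix (SpIdx r) (SpIdx r) ℂ) (φ : TwSpinor r n) : TwSpinor r n :=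
  ∑ i : Fin n, ∑ j : Fin n,
    if i < j then
      ((etaM r n M φ (stdBasis n i) (stdBasis n j) : ℝ) : ℂ) • actN (genMat n (i:ℕ) * genMat n (j:ℕ)) φ
    else 0

def InSigma (r n : ℕ) (φ : TwSpinor r n) : Prop :=
  r % 2 = 1 ∨ actR (((-I) ^ (r / 2)) • volMat r) φ = φ

structure IsPartiallyPure (r n : ℕ) (φ : TwSpinor r n) (V : Submodule ℝ (Rn n)) : Prop where
  lt_dim : r < n
  mem_sigma : InSigma r n φ
  unit_norm : ‖φ‖ = 1
  dim_eq : Module.finrank ℝ V = n - r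
  exists_conj : ∀ X ∈ V, ∃ Y ∈ V, actN (vecMat n X) φ = I • actN (vecMat n Y) φ
  eta_plus : ∀ k l : Fin r, k < l →
    etaActionM r n (genMat r (k : ℕ) * genMat r (l : ℕ)) φ
      + actR (genMat r (k : ℕ) * genMat r (l : ℕ)) φ = 0
  f_orth : ∀ k l : Fin r, k < l →
    (inner ℂ (actR (genMat r (k : ℕ) * genMat r (l : ℕ)) φ) φ : ℂ) = 0
  vol_orth : r = 4 → (inner ℂ (actR (volMat r) φ) φ : ℂ) = 0
-- real matrix applied to a Euclidean vector
def mvE {n : ℕ} (M : Matrix (Fin n) (Fin n) ℝ) (x : Rn n) : Rn n := WithLp.toLp 2 (fun i => ∑ j, M i j * x j)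

def etaHatMat (r n : ℕ) (φ : TwSpinor r n) (k l : ℕ) : Matrix (Fin n) (Fin n) ℝ :=
  Matrix.of fun i j => eta r n φ k l (stdBasis n j) (stdBasis n i)

def etaHatExt (r n : ℕ) (φ : TwSpinor r n) (k l : Fin r) : Matrix (Fin n) (Fin n) ℝ :=
  if k = l then 0 else if k < l then etaHatMat r n φ (k : ℕ) (l : ℕ)
  else -(etaHatMat r n φ (l : ℕ) (k : ℕ))

def etaPhi (r n : ℕ) (φ : TwSpinor r n) (C : Matrix (Fin r) (Fin r) ℝ) :
    Matrix (Fin n) (Fin n) ℝ :=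
  ∑ k : Fin r, ∑ l : Fin r, if k < l then C k l • etaHatMat r n φ (k : ℕ) (l : ℕ) else 0

def IsEtaFrame (r n : ℕ) (φ : TwSpinor r n) (V : Submodule ℝ (Rn n)) (v : Fin r → Rn n) : Prop :=
  Orthonormal ℝ v ∧ (∀ k, v k ∈ Vᗮ) ∧
    ∀ k l : Fin r, k < l → ∀ X Y : Rn n,
      eta r n φ (k : ℕ) (l : ℕ) X Y
        = (inner ℝ (v k) X : ℝ) * (inner ℝ (v l) Y : ℝ) - (inner ℝ (v l) X : ℝ) * (inner ℝ (v k) Y : ℝ)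

def IsJ (r n : ℕ) (φ : TwSpinor r n) (V : Submodule ℝ (Rn n)) (J : Rn n → Rn n) : Prop :=
  (∀ X ∈ V, J X ∈ V) ∧ ∀ X ∈ V, actN (vecMat n X) φ = I • actN (vecMat n (J X)) φ

def Fop (r n : ℕ) (φ : TwSpinor r n) : TwSpinor r n :=
  ((-I) ^ (n / 2) * I ^ (r / 2)) • actN (volMat n) (actR (volMat r) φ)

def tripleFrame (m r : ℕ) (v vJ : Fin m → Rn (2*m+r)) (w : Fin r → Rn (2*m+r)) :
    Fin (2*m+r) → Rn (2*m+r) :=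
  fun i => if h : (i : ℕ) < 2*m then
      (if (i : ℕ) % 2 = 0 then v ⟨(i:ℕ)/2, by omega⟩ else vJ ⟨(i:ℕ)/2, by omega⟩)
    else w ⟨(i:ℕ) - 2*m, by have := i.isLt; omega⟩

def frameDet (n : ℕ) (u : Fin n → Rn n) : ℝ := (Matrix.of fun i j => u i j).det

def TripleSign (m r : ℕ) (φ : TwSpinor r (2*m+r)) (V : Submodule ℝ (Rn (2*m+r)))
    (J : Rn (2*m+r) → Rn (2*m+r)) (c : ℝ) : Prop :=
  ∃ (v : Fin m → Rn (2*m+r)) (w : Fin r → Rn (2*m+r)),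
    (∀ j, v j ∈ V) ∧ IsEtaFrame r (2*m+r) φ V w ∧
    Orthonormal ℝ (tripleFrame m r v (fun j => J (v j)) w) ∧
    frameDet (2*m+r) (tripleFrame m r v (fun j => J (v j)) w) = c

def IsCompatTriple (m r : ℕ) (V : Submodule ℝ (Rn (2*m+r)))
    (J : Rn (2*m+r) → Rn (2*m+r)) (w : Fin r → Rn (2*m+r)) : Prop :=
  Module.finrank ℝ V = 2*m ∧ (∀ x ∈ V, J x ∈ V) ∧ (∀ x ∈ V, J (J x) = -x) ∧
  (∀ x ∈ V, ∀ y ∈ V, (inner ℝ (J x) (J y) : ℝ) = (inner ℝ x y : ℝ)) ∧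
  Orthonormal ℝ w ∧ (∀ k, w k ∈ Vᗮ)

def IsPosTriple (m r : ℕ) (V : Submodule ℝ (Rn (2*m+r)))
    (J : Rn (2*m+r) → Rn (2*m+r)) (w : Fin r → Rn (2*m+r)) : Prop :=
  IsCompatTriple m r V J w ∧ ∃ v : Fin m → Rn (2*m+r), (∀ j, v j ∈ V) ∧
    Orthonormal ℝ (tripleFrame m r v (fun j => J (v j)) w) ∧
    frameDet (2*m+r) (tripleFrame m r v (fun j => J (v j)) w) = 1

def SpinMat (n : ℕ) : Set (Matrix (SpIdx n) (SpIdx n) ℂ) :=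
  {M | ∃ L : List (Rn n), L.length % 2 = 0 ∧ (∀ x ∈ L, ‖x‖ = 1) ∧
        M = (L.map (vecMat n)).prod}

def kronOp {r n : ℕ} (h : Matrix (SpIdx r) (SpIdx r) ℂ) (g : Matrix (SpIdx n) (SpIdx n) ℂ) :
    Matrix (SpIdx r × SpIdx n) (SpIdx r × SpIdx n) ℂ :=
  Matrix.of fun p q => h p.1 q.1 * g p.2 q.2

def SpinCR (r n : ℕ) : Set (Matrix (SpIdx r × SpIdx n) (SpIdx r × SpIdx n) ℂ) :=
  {U | ∃ g ∈ SpinMat n, ∃ h ∈ SpinMat r, ∃ z : ℂ, ‖z‖ = 1 ∧ U = z • kronOp h g}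

def SpinCsub (r n : ℕ) : Set (Matrix (SpIdx r × SpIdx n) (SpIdx r × SpIdx n) ℂ) :=
  {U | ∃ h ∈ SpinMat r, ∃ z : ℂ, ‖z‖ = 1 ∧ U = z • kronOp h 1}

def twAct {r n : ℕ} (U : Matrix (SpIdx r × SpIdx n) (SpIdx r × SpIdx n) ℂ)
    (φ : TwSpinor r n) : TwSpinor r n :=
  WithLp.toLp 2 (fun p => ∑ q, U p q * φ q)

def SOset (r : ℕ) : Set (Matrix (Fin r) (Fin r) ℝ) := {B | B * Bᵀ = 1 ∧ B.det = 1}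

def SOg (r : ℕ) : Subgroup (Matrix.orthogonalGroup (Fin r) ℝ) :=
  MonoidHom.ker (Matrix.detMonoidHom.comp (Matrix.orthogonalGroup (Fin r) ℝ).subtype)

def soMat {r : ℕ} (B : ↥(SOg r)) : Matrix (Fin r) (Fin r) ℝ := ((B : Matrix.orthogonalGroup (Fin r) ℝ) : Matrix (Fin r) (Fin r) ℝ)

def toCvec (m r : ℕ) (x : Rn (2*m+r)) : Fin m → ℂ :=
  fun j => (x ⟨2*(j:ℕ), by have := j.isLt; omega⟩ : ℝ) + (x ⟨2*(j:ℕ)+1, by have := j.isLt; omega⟩ : ℝ) * I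

def blockMap (m r : ℕ) (A : Matrix (Fin m) (Fin m) ℂ) (B : Matrix (Fin r) (Fin r) ℝ) :
    Rn (2*m+r) → Rn (2*m+r) :=
  fun x => WithLp.toLp 2 (fun i : Fin (2*m+r) =>
    if h : (i : ℕ) < 2*m then
      (if (i : ℕ) % 2 = 0 then (A.mulVec (toCvec m r x) ⟨(i:ℕ)/2, by omega⟩).re
       else (A.mulVec (toCvec m r x) ⟨(i:ℕ)/2, by omega⟩).im)
    else ∑ k : Fin r, B ⟨(i:ℕ) - 2*m, by have := i.isLt; omega⟩ k
            * x ⟨2*m + (k:ℕ), by have := k.isLt; omega⟩)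

/-- The operator of the rotated basis vector `f_i' = ∑ j A i j f_j` (index `k : ℕ`, 0-based). -/
def fMatRot (r : ℕ) (A : Matrix (Fin r) (Fin r) ℝ) (k : ℕ) : Matrix (SpIdx r) (SpIdx r) ℂ :=
  ∑ j : Fin r, ((if h : k < r then A ⟨k, h⟩ j else 0 : ℝ) : ℂ) • genMat r (j : ℕ)


namespace Stmt6Aux

lemma sum_split {M : Type*} [AddCommMonoid M] {r : ℕ} (f : Fin r → Fin r → M) :
    ∑ j, ∑ m, f j m
      = (∑ j, ∑ m, if j < m then f j m + f m j else 0) + ∑ j, f j j := by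
  have h1 : ∀ j m : Fin r, f j m
      = ((if j < m then f j m else 0) + (if m < j then f j m else 0))
        + (if j = m then f j m else 0) := by
    intro j m
    rcases lt_trichotomy j m with h | h | h
    · simp [h, h.ne, not_lt_of_gt h]
    · simp [h, lt_irrefl]
    · simp [h, h.ne', not_lt_of_gt h]
  calc ∑ j, ∑ m, f j m
      = ∑ j, ∑ m, (((if j < m then f j m else 0) + (if m < j then f j m else 0))
          + (if j = m then f j m else 0)) := by
        exact Finset.sum_congr rfl fun j _ => Finset.sum_congr rfl fun m _ => h1 j m
    _ = ((∑ j, ∑ m, if j < m then f j m else 0) + ∑ j, ∑ m, if m < j then f j m else 0)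
          + ∑ j, ∑ m, if j = m then f j m else 0 := by
        simp [Finset.sum_add_distrib]
    _ = (∑ j, ∑ m, if j < m then f j m + f m j else 0) + ∑ j, f j j := by
        congr 1
        · rw [show (∑ j, ∑ m, if m < j then f j m else 0)
              = ∑ j, ∑ m, if j < m then f m j else 0 from Finset.sum_comm]
          rw [← Finset.sum_add_distrib]
          refine Finset.sum_congr rfl fun j _ => ?_
          rw [← Finset.sum_add_distrib]
          refine Finset.sum_congr rfl fun m _ => ?_
          split <;> simp
        · refine Finset.sum_congr rfl fun j _ => ?_
          simp

lemma key_core {R : Type*} [Ring R] (G : ℕ → R) (L : R → ℂ)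
    (hLneg : ∀ M : R, L (-M) = -L M) (hL1 : L 1 = 1)
    (hpair : ∀ a b : ℕ, a < 4 → b < 4 → a ≠ b → L (G a * G b) = 0)
    (hvol : L (G 0 * (G 1 * (G 2 * G 3))) = 0)
    (hsq : ∀ i : ℕ, i < 4 → G i * G i = -1)
    (hswapB : ∀ i j : ℕ, j < i → i < 4 → G i * G j = -(G j * G i))
    (hswapC : ∀ (i j : ℕ) (X : R), j < i → i < 4 → G i * (G j * X) = -(G j * (G i * X)))
    (hsqC : ∀ (i : ℕ) (X : R), i < 4 → G i * (G i * X) = -X) :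
    ∀ j m p q : ℕ, j < m → m < 4 → p < q → q < 4 →
      L (G j * G m * (G p * G q)) = if j = p ∧ m = q then -1 else 0 := by
  intro j m p q hjm hm hpq hq
  have hj : j < 4 := by omega
  have hp : p < 4 := by omega
  interval_cases j <;> interval_cases m <;> interval_cases p <;> interval_cases q <;>
    · simp (config := { decide := true }) only [mul_assoc, hswapC, hsqC, hswapB, hsq, mul_neg,
        neg_mul, neg_neg, mul_one, mul_neg_one, hLneg, hL1, hvol, hpair, Nat.lt_irrefl]
      norm_num

lemma key_aux {R : Type*} [Ring R] (G : ℕ → R) (L : R → ℂ)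
    (hLneg : ∀ M : R, L (-M) = -L M) (hL1 : L 1 = 1)
    (hpair : ∀ a b : ℕ, a < 4 → b < 4 → a ≠ b → L (G a * G b) = 0)
    (hvol : L (G 0 * (G 1 * (G 2 * G 3))) = 0)
    (hsq : ∀ i : ℕ, i < 4 → G i * G i = -1)
    (hac : ∀ i j : ℕ, i < 4 → j < 4 → i ≠ j → G i * G j = -(G j * G i)) :
    ∀ j m p q : ℕ, j < m → m < 4 → p < q → q < 4 →
      L (G j * G m * (G p * G q)) = if j = p ∧ m = q then -1 else 0 := by
  have hswapB : ∀ i j : ℕ, j < i → i < 4 → G i * G j = -(G j * G i) :=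
    fun i j h h4 => hac i j h4 (by omega) (by omega)
  exact key_core G L hLneg hL1 hpair hvol hsq hswapB
    (fun i j X h h4 => by rw [← mul_assoc, hswapB i j h h4, neg_mul, mul_assoc])
    (fun i X h4 => by rw [← mul_assoc, hsq i h4, neg_one_mul])

lemma tensorOp_mul {k : ℕ} (M N : Fin k → Matrix (Fin 2) (Fin 2) ℂ) :
    tensorOp M * tensorOp N = tensorOp (fun t => M t * N t) := by
  ext x y
  simp only [tensorOp, Matrix.mul_apply, Matrix.of_apply]
  rw [Finset.prod_univ_sum (fun _ => (Finset.univ : Finset (Fin 2)))]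
  rw [Fintype.piFinset_univ]
  exact (Finset.sum_congr rfl fun b _ => by rw [Finset.prod_mul_distrib]).symm

lemma tensorOp_one {k : ℕ} : tensorOp (fun _ : Fin k => (1 : Matrix (Fin 2) (Fin 2) ℂ)) = 1 := by
  ext x y
  simp only [tensorOp, Matrix.of_apply, Matrix.one_apply, Finset.prod_boole]
  by_cases h : x = y
  · simp [h]
  · rw [if_neg h, if_neg]
    rw [funext_iff] at h
    push_neg at h ⊢
    simpa using h

lemma tensorOp_neg_slot {k : ℕ} (M N : Fin k → Matrix (Fin 2) (Fin 2) ℂ) (t0 : Fin k)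
    (h0 : M t0 = -(N t0)) (h : ∀ t, t ≠ t0 → M t = N t) : tensorOp M = -tensorOp N := by
  ext x y
  simp only [tensorOp, Matrix.of_apply, Matrix.neg_apply]
  rw [← Finset.mul_prod_erase Finset.univ _ (Finset.mem_univ t0),
      ← Finset.mul_prod_erase Finset.univ (fun t => N t (x t) (y t)) (Finset.mem_univ t0)]
  rw [h0]
  have : ∀ t ∈ Finset.univ.erase t0, M t (x t) (y t) = N t (x t) (y t) := by
    intro t ht
    rw [h t (Finset.mem_erase.1 ht).1]
  rw [Finset.prod_congr rfl this]
  simp [Matrix.neg_apply]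

lemma g1_sq : g1M * g1M = -1 := by
  ext i j; fin_cases i <;> fin_cases j <;> simp [g1M, Matrix.mul_fin_two, Complex.I_mul_I]
lemma g2_sq : g2M * g2M = -1 := by
  ext i j; fin_cases i <;> fin_cases j <;> simp [g2M, Matrix.mul_fin_two, Complex.I_mul_I]
lemma T_sq : TM * TM = 1 := by
  ext i j; fin_cases i <;> fin_cases j <;> simp [TM, Matrix.mul_fin_two, Complex.I_mul_I]
lemma g1_g2 : g1M * g2M = -(g2M * g1M) := by
  ext i j; fin_cases i <;> fin_cases j <;> simp [g1M, g2M, Matrix.mul_fin_two, Complex.I_mul_I]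
lemma g1_T : g1M * TM = -(TM * g1M) := by
  ext i j; fin_cases i <;> fin_cases j <;> simp [g1M, TM, Matrix.mul_fin_two, Complex.I_mul_I]
lemma g2_T : g2M * TM = -(TM * g2M) := by
  ext i j; fin_cases i <;> fin_cases j <;> simp [g2M, TM, Matrix.mul_fin_two, Complex.I_mul_I]

lemma genMat_sq (n i : ℕ) : genMat n i * genMat n i = -1 := by
  by_cases hlt : i < 2 * (n / 2)
  · simp only [genMat, if_pos hlt, tensorOp_mul]
    have hPk : n / 2 - 1 - i / 2 < n / 2 := by omega
    rw [tensorOp_neg_slot _ (fun _ => 1) ⟨_, hPk⟩ ?_ ?_, tensorOp_one]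
    · show (if (n/2-1-i/2 : ℕ) < n/2-1-i/2 then _ else _) * _ = _
      rw [if_neg (lt_irrefl _), if_pos rfl]
      by_cases hp : i % 2 = 0 <;> simp [hp, g1_sq, g2_sq]
    · intro t ht
      have ht' : (t : ℕ) ≠ n/2-1-i/2 := fun h => ht (Fin.ext h)
      rcases lt_or_gt_of_ne ht' with h | h
      · simp [h]
      · rw [if_neg (by omega), if_neg ht', T_sq]
  · simp only [genMat, if_neg hlt]
    rw [Matrix.mul_smul, Matrix.smul_mul, smul_smul, Complex.I_mul_I, tensorOp_mul]
    have : (fun t : Fin (n/2) => TM * TM) = (fun _ => (1 : Matrix (Fin 2) (Fin 2) ℂ)) := by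
      funext t; exact T_sq
    rw [this, tensorOp_one]
    simp

lemma genMat_anticomm_lt (n i j : ℕ) (hj : j < n) (hij : i < j) :
    genMat n i * genMat n j = -(genMat n j * genMat n i) := by
  have hi2 : i < 2 * (n / 2) := by omega
  by_cases hjlt : j < 2 * (n / 2)
  · simp only [genMat, if_pos hi2, if_pos hjlt, tensorOp_mul]
    by_cases hsame : i / 2 = j / 2
    · have hie : i % 2 = 0 := by omega
      have hjo : j % 2 = 1 := by omega
      have hPk : n / 2 - 1 - i / 2 < n / 2 := by omega
      rw [tensorOp_neg_slot _ _ ⟨_, hPk⟩ ?_ ?_]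
      · show (if (n/2-1-i/2 : ℕ) < n/2-1-i/2 then _ else _) * _ = _
        rw [← hsame]
        rw [if_neg (lt_irrefl _), if_pos rfl, if_neg (lt_irrefl _), if_pos rfl]
        simp [hie, hjo, g1_g2]
      · intro t ht
        have ht' : (t : ℕ) ≠ n/2-1-i/2 := fun h => ht (Fin.ext h)
        rw [← hsame]
        rcases lt_or_gt_of_ne ht' with h | h
        · simp [h]
        · simp only [if_neg (show ¬ (t:ℕ) < n/2-1-i/2 by omega), if_neg ht']
    · have hlt2 : i / 2 < j / 2 := by omega
      have hPj : n/2-1-j/2 < n/2-1-i/2 := by omega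
      have hPk : n / 2 - 1 - i / 2 < n / 2 := by omega
      rw [tensorOp_neg_slot _ _ ⟨_, hPk⟩ ?_ ?_]
      · show ((if (n/2-1-i/2 : ℕ) < n/2-1-i/2 then _ else _) * _ : Matrix (Fin 2) (Fin 2) ℂ) = _
        rw [if_neg (lt_irrefl _), if_pos rfl, if_neg (by omega : ¬ (n/2-1-i/2 : ℕ) < n/2-1-j/2),
            if_neg (by omega : ¬ (n/2-1-i/2 : ℕ) = n/2-1-j/2)]
        by_cases hp : i % 2 = 0 <;> simp [hp, g1_T, g2_T]
      · intro t ht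
        have ht' : (t : ℕ) ≠ n/2-1-i/2 := fun h => ht (Fin.ext h)
        by_cases h1 : (t : ℕ) < n/2-1-j/2
        · rw [if_pos (by omega : (t:ℕ) < n/2-1-i/2), if_pos h1]
        · by_cases h2 : (t : ℕ) = n/2-1-j/2
          · rw [if_pos (by omega : (t:ℕ) < n/2-1-i/2), if_neg h1, if_pos h2, one_mul, mul_one]
          · rw [if_neg h1, if_neg h2]
            by_cases h3 : (t : ℕ) < n/2-1-i/2
            · rw [if_pos h3, one_mul, mul_one]
            · rw [if_neg h3, if_neg ht']
  · simp only [genMat, if_pos hi2, if_neg hjlt]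
    rw [Matrix.mul_smul, Matrix.smul_mul, tensorOp_mul, tensorOp_mul, ← smul_neg]
    congr 1
    have hPk : n / 2 - 1 - i / 2 < n / 2 := by omega
    rw [tensorOp_neg_slot _ _ ⟨_, hPk⟩ ?_ ?_]
    · show ((if (n/2-1-i/2 : ℕ) < n/2-1-i/2 then _ else _) * _ : Matrix (Fin 2) (Fin 2) ℂ) = _
      rw [if_neg (lt_irrefl _), if_pos rfl]
      by_cases hp : i % 2 = 0 <;> simp [hp, g1_T, g2_T]
    · intro t ht
      have ht' : (t : ℕ) ≠ n/2-1-i/2 := fun h => ht (Fin.ext h)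
      rcases lt_or_gt_of_ne ht' with h | h
      · rw [if_pos h, one_mul, mul_one]
      · rw [if_neg (by omega), if_neg ht']

lemma genMat_anticomm (n i j : ℕ) (hi : i < n) (hj : j < n) (hij : i ≠ j) :
    genMat n i * genMat n j = -(genMat n j * genMat n i) := by
  rcases lt_or_gt_of_ne hij with h | h
  · exact genMat_anticomm_lt n i j hj h
  · rw [genMat_anticomm_lt n j i hi h]; simp

variable {r n : ℕ}

lemma actR_add (M N : Matrix (SpIdx r) (SpIdx r) ℂ) (φ : TwSpinor r n) :
    actR (M + N) φ = actR M φ + actR N φ := by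
  ext p
  simp [actR, PiLp.add_apply, add_mul, Finset.sum_add_distrib]

lemma actR_smul (c : ℂ) (M : Matrix (SpIdx r) (SpIdx r) ℂ) (φ : TwSpinor r n) :
    actR (c • M) φ = c • actR M φ := by
  ext p
  simp [actR, PiLp.smul_apply, Finset.mul_sum, mul_assoc]

lemma actR_neg (M : Matrix (SpIdx r) (SpIdx r) ℂ) (φ : TwSpinor r n) :
    actR (-M) φ = -actR M φ := by
  ext p
  simp [actR, PiLp.neg_apply]

lemma actR_zero (φ : TwSpinor r n) : actR (0 : Matrix (SpIdx r) (SpIdx r) ℂ) φ = 0 := by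
  ext p; simp [actR]

lemma actR_one (φ : TwSpinor r n) : actR (1 : Matrix (SpIdx r) (SpIdx r) ℂ) φ = φ := by
  ext p
  simp [actR, Matrix.one_apply]

lemma actR_mul (M N : Matrix (SpIdx r) (SpIdx r) ℂ) (φ : TwSpinor r n) :
    actR (M * N) φ = actR M (actR N φ) := by
  ext p
  simp only [actR, Matrix.mul_apply, Finset.sum_mul, Finset.mul_sum]
  rw [Finset.sum_comm]
  exact Finset.sum_congr rfl fun a _ => Finset.sum_congr rfl fun b _ => by ring

lemma actR_sum {ι : Type*} (s : Finset ι) (M : ι → Matrix (SpIdx r) (SpIdx r) ℂ)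
    (φ : TwSpinor r n) : actR (∑ i ∈ s, M i) φ = ∑ i ∈ s, actR (M i) φ := by
  classical
  induction s using Finset.induction_on with
  | empty => simp [actR_zero]
  | insert a s h ih => rw [Finset.sum_insert h, actR_add, ih, Finset.sum_insert h]

lemma actN_add (M : Matrix (SpIdx n) (SpIdx n) ℂ) (ψ χ : TwSpinor r n) :
    actN M (ψ + χ) = actN M ψ + actN M χ := by
  ext p
  simp [actN, PiLp.add_apply, mul_add, Finset.sum_add_distrib]

lemma actN_smul (M : Matrix (SpIdx n) (SpIdx n) ℂ) (c : ℂ) (ψ : TwSpinor r n) :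
    actN M (c • ψ) = c • actN M ψ := by
  ext p
  simp [actN, PiLp.smul_apply, Finset.mul_sum]
  exact Finset.sum_congr rfl fun b _ => by ring

lemma actN_zero (M : Matrix (SpIdx n) (SpIdx n) ℂ) :
    actN M (0 : TwSpinor r n) = 0 := by
  ext p
  simp [actN]

lemma etaM_add (M N : Matrix (SpIdx r) (SpIdx r) ℂ) (φ : TwSpinor r n) (X Y : Rn n) :
    etaM r n (M + N) φ X Y = etaM r n M φ X Y + etaM r n N φ X Y := by
  simp [etaM, actR_add, actN_add, inner_add_left]

lemma etaM_smul (c : ℝ) (M : Matrix (SpIdx r) (SpIdx r) ℂ) (φ : TwSpinor r n) (X Y : Rn n) :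
    etaM r n ((c : ℂ) • M) φ X Y = c * etaM r n M φ X Y := by
  simp only [etaM, actR_smul, actN_smul, inner_smul_left]
  simp [Complex.conj_ofReal]

lemma etaM_zero (φ : TwSpinor r n) (X Y : Rn n) :
    etaM r n (0 : Matrix (SpIdx r) (SpIdx r) ℂ) φ X Y = 0 := by
  simp [etaM, actR_zero, actN_zero]

lemma etaActionM_add (M N : Matrix (SpIdx r) (SpIdx r) ℂ) (φ : TwSpinor r n) :
    etaActionM r n (M + N) φ = etaActionM r n M φ + etaActionM r n N φ := by
  unfold etaActionM
  rw [← Finset.sum_add_distrib]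
  refine Finset.sum_congr rfl fun i _ => ?_
  rw [← Finset.sum_add_distrib]
  refine Finset.sum_congr rfl fun j _ => ?_
  split
  · rw [etaM_add]; push_cast; rw [add_smul]
  · simp

lemma etaActionM_smul (c : ℝ) (M : Matrix (SpIdx r) (SpIdx r) ℂ) (φ : TwSpinor r n) :
    etaActionM r n ((c : ℂ) • M) φ = (c : ℂ) • etaActionM r n M φ := by
  unfold etaActionM
  rw [Finset.smul_sum]
  refine Finset.sum_congr rfl fun i _ => ?_
  rw [Finset.smul_sum]
  refine Finset.sum_congr rfl fun j _ => ?_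
  split
  · rw [etaM_smul]; push_cast; rw [mul_smul]
  · simp

lemma etaActionM_zero (φ : TwSpinor r n) :
    etaActionM r n (0 : Matrix (SpIdx r) (SpIdx r) ℂ) φ = 0 := by
  unfold etaActionM
  refine Finset.sum_eq_zero fun i _ => Finset.sum_eq_zero fun j _ => ?_
  split
  · rw [etaM_zero]; simp
  · rfl

lemma etaActionM_sum {ι : Type*} (s : Finset ι) (M : ι → Matrix (SpIdx r) (SpIdx r) ℂ)
    (φ : TwSpinor r n) :
    etaActionM r n (∑ i ∈ s, M i) φ = ∑ i ∈ s, etaActionM r n (M i) φ := by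
  classical
  induction s using Finset.induction_on with
  | empty => simp [etaActionM_zero]
  | insert a s h ih => rw [Finset.sum_insert h, etaActionM_add, ih, Finset.sum_insert h]

end Stmt6Aux
open Stmt6Aux in
/-- independence of the notion of partially pure spinor from the choice of
oriented orthonormal basis of ℝ^r. -/
theorem stmt6 (n r : ℕ) (hr : 2 ≤ r) (φ : TwSpinor r n) (V : Submodule ℝ (Rn n))
    (hpp : IsPartiallyPure r n φ V)
    (A : Matrix (Fin r) (Fin r) ℝ) (hA : A ∈ SOset r) :
    (∀ k l : Fin r, k < l →
      etaActionM r n (fMatRot r A (k : ℕ) * fMatRot r A (l : ℕ)) φ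
          + actR (fMatRot r A (k : ℕ) * fMatRot r A (l : ℕ)) φ = 0 ∧
      (inner ℂ (actR (fMatRot r A (k : ℕ) * fMatRot r A (l : ℕ)) φ) φ : ℂ) = 0) ∧
    (r = 4 →
      (inner ℂ (actR (((List.range r).map (fMatRot r A)).prod) φ) φ : ℂ) = 0) := by
  obtain ⟨hA1, _hA2⟩ := hA
  have hAorth : ∀ k l : Fin r, k ≠ l → ∑ j : Fin r, A k j * A l j = 0 := by
    intro k l hkl
    have h := congrArg (fun B => B k l) hA1
    simpa [Matrix.mul_apply, Matrix.transpose_apply, Matrix.one_apply, hkl] using h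
  have hF : ∀ k : Fin r, fMatRot r A (k : ℕ)
      = ∑ j : Fin r, ((A k j : ℝ) : ℂ) • genMat r (j : ℕ) := by
    intro k
    unfold fMatRot
    refine Finset.sum_congr rfl fun j _ => ?_
    rw [dif_pos k.isLt]
  have hFF : ∀ k l : Fin r, k ≠ l →
      fMatRot r A (k : ℕ) * fMatRot r A (l : ℕ)
        = ∑ j : Fin r, ∑ m : Fin r, if j < m then
            (((A k j * A l m - A k m * A l j : ℝ)) : ℂ)
              • (genMat r (j : ℕ) * genMat r (m : ℕ)) else 0 := by
    intro k l hkl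
    rw [hF k, hF l, Finset.sum_mul_sum]
    have step : ∀ j m : Fin r,
        (((A k j : ℝ) : ℂ) • genMat r (j : ℕ)) * (((A l m : ℝ) : ℂ) • genMat r (m : ℕ))
          = ((A k j * A l m : ℝ) : ℂ) • (genMat r (j : ℕ) * genMat r (m : ℕ)) := by
      intro j m
      rw [smul_mul_smul_comm]
      push_cast
      rfl
    rw [Finset.sum_congr rfl fun j _ => Finset.sum_congr rfl fun m _ => step j m]
    rw [sum_split (fun j m => ((A k j * A l m : ℝ) : ℂ) • (genMat r (j : ℕ) * genMat r (m : ℕ)))]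
    have hdiag : ∑ j : Fin r, ((A k j * A l j : ℝ) : ℂ) • (genMat r (j : ℕ) * genMat r (j : ℕ))
        = 0 := by
      have e1 : ∀ j : Fin r, ((A k j * A l j : ℝ) : ℂ) • (genMat r (j : ℕ) * genMat r (j : ℕ))
          = ((A k j * A l j : ℝ) : ℂ) • (-1 : Matrix (SpIdx r) (SpIdx r) ℂ) := by
        intro j; rw [genMat_sq]
      rw [Finset.sum_congr rfl fun j _ => e1 j, ← Finset.sum_smul]
      have : (∑ j : Fin r, ((A k j * A l j : ℝ) : ℂ)) = 0 := by
        rw [← Complex.ofReal_sum, hAorth k l hkl, Complex.ofReal_zero]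
      rw [this, zero_smul]
    rw [hdiag, add_zero]
    refine Finset.sum_congr rfl fun j _ => Finset.sum_congr rfl fun m _ => ?_
    split
    · rename_i hjm
      rw [genMat_anticomm r (m : ℕ) (j : ℕ) m.isLt j.isLt (by exact fun h => hjm.ne' (Fin.ext h)),
        smul_neg, ← sub_eq_add_neg, ← sub_smul]
      push_cast
      ring_nf
    · rfl
  constructor
  · intro k l hkl
    have hFF' := hFF k l hkl.ne
    constructor
    · rw [hFF', etaActionM_sum, actR_sum, ← Finset.sum_add_distrib]
      refine Finset.sum_eq_zero fun j _ => ?_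
      rw [etaActionM_sum, actR_sum, ← Finset.sum_add_distrib]
      refine Finset.sum_eq_zero fun m _ => ?_
      split
      · rename_i hjm
        rw [etaActionM_smul, actR_smul, ← smul_add, hpp.eta_plus j m hjm, smul_zero]
      · rw [etaActionM_zero, actR_zero, add_zero]
    · rw [hFF', actR_sum, sum_inner]
      refine Finset.sum_eq_zero fun j _ => ?_
      rw [actR_sum, sum_inner]
      refine Finset.sum_eq_zero fun m _ => ?_
      split
      · rename_i hjm
        rw [actR_smul, inner_smul_left, hpp.f_orth j m hjm, mul_zero]
      · rw [actR_zero, inner_zero_left]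
  · intro h4
    subst h4
    -- Notation
    have hL1 : (inner ℂ (actR (1 : Matrix (SpIdx 4) (SpIdx 4) ℂ) φ) φ : ℂ) = 1 := by
      rw [actR_one, inner_self_eq_norm_sq_to_K, hpp.unit_norm]
      norm_num
    have hpair : ∀ a b : ℕ, a < 4 → b < 4 → a ≠ b →
        (inner ℂ (actR (genMat 4 a * genMat 4 b) φ) φ : ℂ) = 0 := by
      intro a b ha hb hab
      rcases lt_or_gt_of_ne hab with h | h
      · exact hpp.f_orth ⟨a, ha⟩ ⟨b, hb⟩ (by exact h)
      · rw [genMat_anticomm 4 a b ha hb hab, actR_neg, inner_neg_left,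
          hpp.f_orth ⟨b, hb⟩ ⟨a, ha⟩ (by exact h), neg_zero]
    have hvolEq : volMat 4 = genMat 4 0 * (genMat 4 1 * (genMat 4 2 * genMat 4 3)) := by
      show ((List.range 4).map (genMat 4)).prod = _
      rw [show List.range 4 = [0, 1, 2, 3] from rfl]
      simp [mul_assoc]
    have hvol : (inner ℂ (actR (genMat 4 0 * (genMat 4 1 * (genMat 4 2 * genMat 4 3))) φ) φ : ℂ)
        = 0 := by
      rw [← hvolEq]
      exact hpp.vol_orth rfl
    have key : ∀ j m p q : ℕ, j < m → m < 4 → p < q → q < 4 →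
        (inner ℂ (actR (genMat 4 j * genMat 4 m * (genMat 4 p * genMat 4 q)) φ) φ : ℂ)
          = if j = p ∧ m = q then -1 else 0 := key_aux (genMat 4) (fun M => (inner ℂ (actR M φ) φ : ℂ))
      (fun M => by simp only [actR_neg, inner_neg_left])
      hL1 hpair hvol (fun i _ => genMat_sq 4 i)
      (fun i j hi hj hij => genMat_anticomm 4 i j hi hj hij)
    have hprodEq : ((List.range 4).map (fMatRot 4 A)).prod
        = (fMatRot 4 A (((0 : Fin 4) : ℕ)) * fMatRot 4 A (((1 : Fin 4) : ℕ)))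
          * (fMatRot 4 A (((2 : Fin 4) : ℕ)) * fMatRot 4 A (((3 : Fin 4) : ℕ))) := by
      rw [show List.range 4 = [0, 1, 2, 3] from rfl]
      norm_num [mul_assoc, show ((3 : Fin 4) : ℕ) = 3 from rfl]
    rw [hprodEq, hFF 0 1 (by decide), hFF 2 3 (by decide)]
    have main : (inner ℂ (actR ((∑ j : Fin 4, ∑ m : Fin 4, if j < m then
            (((A 0 j * A 1 m - A 0 m * A 1 j : ℝ)) : ℂ)
              • (genMat 4 (j : ℕ) * genMat 4 (m : ℕ)) else 0)
        * (∑ p : Fin 4, ∑ q : Fin 4, if p < q then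
            (((A 2 p * A 3 q - A 2 q * A 3 p : ℝ)) : ℂ)
              • (genMat 4 (p : ℕ) * genMat 4 (q : ℕ)) else 0)) φ) φ : ℂ)
        = ∑ j : Fin 4, ∑ m : Fin 4, ∑ p : Fin 4, ∑ q : Fin 4,
            (if p < q then ((A 0 p * A 1 q - A 0 q * A 1 p : ℝ) : ℂ) else 0)
            * (if j < m then ((A 2 j * A 3 m - A 2 m * A 3 j : ℝ) : ℂ) else 0)
            * (if (p : ℕ) = (j : ℕ) ∧ (q : ℕ) = (m : ℕ) then (-1 : ℂ) else 0) := by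
      simp only [Finset.sum_mul, Finset.mul_sum]
      simp only [actR_sum, sum_inner]
      refine Finset.sum_congr rfl fun j _ => Finset.sum_congr rfl fun m _ =>
        Finset.sum_congr rfl fun p _ => Finset.sum_congr rfl fun q _ => ?_
      by_cases hpq : p < q <;> by_cases hjm : j < m
      · rw [if_pos hpq, if_pos hjm, if_pos hpq, if_pos hjm, smul_mul_smul_comm, actR_smul,
          inner_smul_left, key (p : ℕ) (q : ℕ) (j : ℕ) (m : ℕ) hpq q.isLt hjm m.isLt]
        rw [RingHom.map_mul, Complex.conj_ofReal, Complex.conj_ofReal, mul_assoc]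
      all_goals simp [hpq, hjm, actR_zero, inner_zero_left]
    rw [main]
    have h02 := hAorth 0 2 (by decide)
    have h03 := hAorth 0 3 (by decide)
    have h12 := hAorth 1 2 (by decide)
    have h13 := hAorth 1 3 (by decide)
    simp only [Fin.sum_univ_four] at h02 h03 h12 h13 ⊢
    have h02C : ((A 0 0 * A 2 0 + A 0 1 * A 2 1 + A 0 2 * A 2 2 + A 0 3 * A 2 3 : ℝ) : ℂ) = 0 := by
      exact_mod_cast congrArg Complex.ofReal h02
    have h03C : ((A 0 0 * A 3 0 + A 0 1 * A 3 1 + A 0 2 * A 3 2 + A 0 3 * A 3 3 : ℝ) : ℂ) = 0 := by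
      exact_mod_cast congrArg Complex.ofReal h03
    norm_num [Fin.lt_def, show ((0 : Fin 4) : ℕ) = 0 from rfl, show ((1 : Fin 4) : ℕ) = 1 from rfl,
      show ((2 : Fin 4) : ℕ) = 2 from rfl, show ((3 : Fin 4) : ℕ) = 3 from rfl]
    push_cast
    push_cast at h02C h03C
    linear_combination (-(A 1 0 * A 3 0 + A 1 1 * A 3 1 + A 1 2 * A 3 2 + A 1 3 * A 3 3 : ℂ)) * h02C
      + ((A 1 0 * A 2 0 + A 1 1 * A 2 1 + A 1 2 * A 2 2 + A 1 3 * A 2 3 : ℂ)) * h03C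
end
end

section
/- Let φ ∈ Σ_r ⊗ Δ_n be a partially pure spinor. Then there is a unique map J^φ : V^φ → V^φ satisfying X·φ = i J^φ(X)·φ for all X ∈ V^φ; it is ℝ-linear and satisfies (J^φ)² = −Id_{V^φ} and ⟨J^φ(X), J^φ(Y)⟩ = ⟨X, Y⟩ for all X, Y ∈ V^φ (i.e. J^φ is an orthogonal complex structure on V^φ); consequently n − r = dim V^φ is even. -/
open Complex Matrix
noncomputable section
/-! Clifford multiplication `X ↦ X · φ` by a unit spinor is a real linear isometry
`ℝⁿ → Δ_r ⊗ Δ_n`: vectors act skew-adjointly and `X · X = -‖X‖²`. Once an injective real-linear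
map `c` into a complex space is fixed, `c X = i · c (J X)` forces `c ∘ J = -i · c`, so `J` is
unique, real-linear, and `J² = -1`; as `c` is isometric and multiplication by `i` preserves norms,
`J` is isometric too. Finally `det J ^ 2 = det (-1) = (-1) ^ dim V`, so `dim V = n - r` is even. -/

theorem LinearMap.even_finrank_of_mul_self_eq_neg_one {K V : Type*} [Field K] [LinearOrder K]
    [IsStrictOrderedRing K] [AddCommGroup V] [Module K V] {f : V →ₗ[K] V} (hf : f * f = -1) :
    Even (Module.finrank K V) := by
  have hdet : LinearMap.det f ^ 2 = (-1) ^ Module.finrank K V := by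
    rw [sq, ← map_mul, hf, ← neg_one_smul K (1 : V →ₗ[K] V), LinearMap.det_smul,
      map_one, mul_one]
  by_contra hodd
  rw [(Nat.not_even_iff_odd.mp hodd).neg_one_pow] at hdet
  nlinarith [sq_nonneg (LinearMap.det f)]

namespace LinearMap

section ISmul

variable {E F : Type*} [AddCommGroup E] [Module ℝ E] [AddCommGroup F] [Module ℂ F]
  [Module ℝ F] {c : E →ₗ[ℝ] F} {J : E → E}

theorem map_eq_neg_I_smul_of_eq_I_smul (hJ : ∀ X, c X = I • c (J X)) (X : E) :
    c (J X) = -I • c X := by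
  rw [hJ X, smul_smul, neg_mul, I_mul_I, neg_neg, one_smul]

theorem existsUnique_map_eq_I_smul (hc : Function.Injective c) (h : ∀ X, ∃ Y, c X = I • c Y) :
    ∃! J : E → E, ∀ X, c X = I • c (J X) := by
  choose J hJ using h
  refine ⟨J, hJ, fun J' hJ' => funext fun X => hc ?_⟩
  rw [map_eq_neg_I_smul_of_eq_I_smul hJ', map_eq_neg_I_smul_of_eq_I_smul hJ]

theorem apply_apply_of_map_eq_I_smul (hc : Function.Injective c)
    (hJ : ∀ X, c X = I • c (J X)) (X : E) : J (J X) = -X := by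
  apply hc
  rw [map_eq_neg_I_smul_of_eq_I_smul hJ, map_eq_neg_I_smul_of_eq_I_smul hJ, smul_smul, map_neg]
  simp

variable [IsScalarTower ℝ ℂ F]

theorem map_smul_add_of_map_eq_I_smul (hc : Function.Injective c)
    (hJ : ∀ X, c X = I • c (J X)) (a : ℝ) (X Y : E) : J (a • X + Y) = a • J X + J Y := by
  apply hc
  simp only [map_add, map_smul, map_eq_neg_I_smul_of_eq_I_smul hJ, smul_add, smul_comm a]

def ofMapEqISmul (hc : Function.Injective c) (hJ : ∀ X, c X = I • c (J X)) : E →ₗ[ℝ] E where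
  toFun := J
  map_add' X Y := by simpa using map_smul_add_of_map_eq_I_smul hc hJ 1 X Y
  map_smul' a X := by
    have hJ0 : J 0 = 0 := hc (by rw [map_eq_neg_I_smul_of_eq_I_smul hJ, map_zero, smul_zero])
    simpa [hJ0] using map_smul_add_of_map_eq_I_smul hc hJ a X 0

theorem even_finrank_of_map_eq_I_smul (hc : Function.Injective c)
    (hJ : ∀ X, c X = I • c (J X)) : Even (Module.finrank ℝ E) :=
  even_finrank_of_mul_self_eq_neg_one (f := ofMapEqISmul hc hJ) <|
    LinearMap.ext (apply_apply_of_map_eq_I_smul hc hJ)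

end ISmul

end LinearMap

theorem LinearIsometry.inner_apply_apply_of_map_eq_I_smul {E F : Type*} [NormedAddCommGroup E]
    [InnerProductSpace ℝ E] [NormedAddCommGroup F] [NormedSpace ℂ F] [NormedSpace ℝ F]
    [IsScalarTower ℝ ℂ F] (c : E →ₗᵢ[ℝ] F) {J : E → E}
    (hJ : ∀ X, c X = I • c (J X)) (X Y : E) :
    (inner ℝ (J X) (J Y) : ℝ) = inner ℝ X Y := by
  refine (LinearMap.norm_map_iff_inner_map_map (LinearMap.ofMapEqISmul c.injective hJ)).1
    (fun X => ?_) X Y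
  rw [← c.norm_map]
  change ‖c.toLinearMap (J X)‖ = _
  rw [LinearMap.map_eq_neg_I_smul_of_eq_I_smul hJ, norm_smul]
  simp

section TensorOp

variable {k : ℕ}

lemma tensorOp_mul (M N : Fin k → Matrix (Fin 2) (Fin 2) ℂ) :
    tensorOp M * tensorOp N = tensorOp (fun t => M t * N t) := by
  ext x y
  simp only [tensorOp, Matrix.mul_apply, Matrix.of_apply, Fintype.prod_sum,
    ← Finset.prod_mul_distrib]

lemma tensorOp_one : tensorOp (fun _ : Fin k => (1 : Matrix (Fin 2) (Fin 2) ℂ)) = 1 := by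
  ext x y
  simp only [tensorOp, Matrix.of_apply, Matrix.one_apply]
  split_ifs with h
  · simp [h]
  · obtain ⟨t, ht⟩ := Function.ne_iff.mp h
    exact Finset.prod_eq_zero (Finset.mem_univ t) (if_neg ht)

lemma tensorOp_conjTranspose (M : Fin k → Matrix (Fin 2) (Fin 2) ℂ) :
    (tensorOp M)ᴴ = tensorOp (fun t => (M t)ᴴ) := by
  ext x y
  simp [tensorOp, Matrix.conjTranspose_apply]

lemma tensorOp_eq_neg_of_eq_neg_at {M N : Fin k → Matrix (Fin 2) (Fin 2) ℂ} (P : Fin k)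
    (hP : M P = -N P) (h : ∀ t ≠ P, M t = N t) : tensorOp M = -tensorOp N := by
  ext x y
  simp only [tensorOp, Matrix.of_apply, Matrix.neg_apply]
  rw [← Finset.mul_prod_erase _ _ (Finset.mem_univ P), ← Finset.mul_prod_erase _ _
    (Finset.mem_univ P), hP,
    Finset.prod_congr rfl fun t ht => by rw [h t (Finset.ne_of_mem_erase ht)]]
  simp

end TensorOp

lemma g1M_mul_self : g1M * g1M = -1 := by
  ext i j; fin_cases i <;> fin_cases j <;> simp [g1M, Matrix.mul_apply, Fin.sum_univ_two]

lemma g2M_mul_self : g2M * g2M = -1 := by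
  ext i j; fin_cases i <;> fin_cases j <;> simp [g2M, Matrix.mul_apply, Fin.sum_univ_two]

lemma TM_mul_self : TM * TM = 1 := by
  ext i j; fin_cases i <;> fin_cases j <;> simp [TM, Matrix.mul_apply, Fin.sum_univ_two]

lemma g1M_conjTranspose : g1Mᴴ = -g1M := by
  ext i j; fin_cases i <;> fin_cases j <;> simp [g1M, Matrix.conjTranspose_apply]

lemma g2M_conjTranspose : g2Mᴴ = -g2M := by
  ext i j; fin_cases i <;> fin_cases j <;> simp [g2M, Matrix.conjTranspose_apply]

lemma TM_conjTranspose : TMᴴ = TM := by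
  ext i j; fin_cases i <;> fin_cases j <;> simp [TM, Matrix.conjTranspose_apply]

lemma g1M_mul_g2M : g1M * g2M = -(g2M * g1M) := by
  ext i j; fin_cases i <;> fin_cases j <;> simp [g1M, g2M, Matrix.mul_apply, Fin.sum_univ_two]

lemma g1M_mul_TM : g1M * TM = -(TM * g1M) := by
  ext i j; fin_cases i <;> fin_cases j <;> simp [g1M, TM, Matrix.mul_apply, Fin.sum_univ_two]

lemma g2M_mul_TM : g2M * TM = -(TM * g2M) := by
  ext i j; fin_cases i <;> fin_cases j <;> simp [g2M, TM, Matrix.mul_apply, Fin.sum_univ_two]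

def genPos (n i : ℕ) : ℕ := n / 2 - 1 - i / 2

def genFactor (n i : ℕ) : Fin (n / 2) → Matrix (Fin 2) (Fin 2) ℂ := fun t =>
  if (t : ℕ) < genPos n i then 1
  else if (t : ℕ) = genPos n i then (if i % 2 = 0 then g1M else g2M)
  else TM

section GenFactor

variable {n i j : ℕ}

lemma genMat_of_lt (hi : i < 2 * (n / 2)) : genMat n i = tensorOp (genFactor n i) := by
  rw [genMat, if_pos hi]; rfl

lemma genMat_of_not_lt (hi : ¬ i < 2 * (n / 2)) : genMat n i = I • tensorOp (fun _ => TM) := by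
  rw [genMat, if_neg hi]

lemma genPos_lt (hi : i < 2 * (n / 2)) : genPos n i < n / 2 := by
  unfold genPos; omega

lemma genFactor_genPos (hi : i < 2 * (n / 2)) :
    genFactor n i ⟨genPos n i, genPos_lt hi⟩ = if i % 2 = 0 then g1M else g2M := by
  simp [genFactor]

lemma genFactor_of_lt {t : Fin (n / 2)} (ht : (t : ℕ) < genPos n i) : genFactor n i t = 1 := by
  simp [genFactor, ht]

lemma genFactor_of_gt {t : Fin (n / 2)} (ht : genPos n i < t) : genFactor n i t = TM := by
  simp [genFactor, ht.ne', ht.not_gt]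

lemma tensorOp_genFactor_mul_self (hi : i < 2 * (n / 2)) :
    tensorOp (genFactor n i) * tensorOp (genFactor n i) = -1 := by
  rw [tensorOp_mul, ← tensorOp_one (k := n / 2)]
  refine tensorOp_eq_neg_of_eq_neg_at ⟨genPos n i, genPos_lt hi⟩ ?_ fun t ht => ?_
  · rw [genFactor_genPos hi]
    split_ifs <;> simp [g1M_mul_self, g2M_mul_self]
  · rcases Nat.lt_or_gt_of_ne (fun h => ht (Fin.ext h)) with h | h
    · simp [genFactor_of_lt h]
    · simp [genFactor_of_gt h, TM_mul_self]

lemma tensorOp_genFactor_conjTranspose (hi : i < 2 * (n / 2)) :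
    (tensorOp (genFactor n i))ᴴ = -tensorOp (genFactor n i) := by
  rw [tensorOp_conjTranspose]
  refine tensorOp_eq_neg_of_eq_neg_at ⟨genPos n i, genPos_lt hi⟩ ?_ fun t ht => ?_
  · rw [genFactor_genPos hi]
    split_ifs <;> simp [g1M_conjTranspose, g2M_conjTranspose]
  · rcases Nat.lt_or_gt_of_ne (fun h => ht (Fin.ext h)) with h | h
    · simp [genFactor_of_lt h]
    · simp [genFactor_of_gt h, TM_conjTranspose]

lemma tensorOp_genFactor_anticomm (hi : i < 2 * (n / 2)) (hj : j < 2 * (n / 2)) (hij : i < j) :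
    tensorOp (genFactor n i) * tensorOp (genFactor n j)
      = -(tensorOp (genFactor n j) * tensorOp (genFactor n i)) := by
  have hle : genPos n j ≤ genPos n i := by unfold genPos; omega
  rw [tensorOp_mul, tensorOp_mul]
  refine tensorOp_eq_neg_of_eq_neg_at ⟨genPos n i, genPos_lt hi⟩ ?_ fun t ht => ?_
  · rw [genFactor_genPos hi]
    rcases hle.eq_or_lt with heq | hlt
    · have hpar : i % 2 = 0 ∧ ¬ j % 2 = 0 := by unfold genPos at heq; omega
      simp [genFactor, heq, hpar, g1M_mul_g2M]
    · rw [genFactor_of_gt hlt]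
      split_ifs <;> simp [g1M_mul_TM, g2M_mul_TM]
  -- away from `genPos n i` the factor of `e_i` is `1`, or `T` where that of `e_j` is `T` too
  · rcases Nat.lt_or_gt_of_ne (fun h => ht (Fin.ext h)) with h | h
    · simp [genFactor_of_lt h]
    · simp [genFactor_of_gt h, genFactor_of_gt (hle.trans_lt h)]

lemma tensorOp_genFactor_anticomm_TM (hi : i < 2 * (n / 2)) :
    tensorOp (genFactor n i) * tensorOp (fun _ => TM)
      = -(tensorOp (fun _ => TM) * tensorOp (genFactor n i)) := by
  rw [tensorOp_mul, tensorOp_mul]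
  refine tensorOp_eq_neg_of_eq_neg_at ⟨genPos n i, genPos_lt hi⟩ ?_ fun t ht => ?_
  · rw [genFactor_genPos hi]
    split_ifs <;> simp [g1M_mul_TM, g2M_mul_TM]
  · rcases Nat.lt_or_gt_of_ne (fun h => ht (Fin.ext h)) with h | h
    · simp [genFactor_of_lt h]
    · simp [genFactor_of_gt h]

end GenFactor

section Clifford

variable {n i j : ℕ}

lemma tensorOp_TM_mul_self {k : ℕ} :
    tensorOp (fun _ : Fin k => TM) * tensorOp (fun _ => TM) = 1 := by
  simp [tensorOp_mul, TM_mul_self, tensorOp_one]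

lemma genMat_mul_self : genMat n i * genMat n i = -1 := by
  by_cases h : i < 2 * (n / 2)
  · rw [genMat_of_lt h, tensorOp_genFactor_mul_self h]
  · rw [genMat_of_not_lt h, smul_mul_smul, I_mul_I, tensorOp_TM_mul_self, neg_one_smul]

lemma genMat_conjTranspose : (genMat n i)ᴴ = -genMat n i := by
  by_cases h : i < 2 * (n / 2)
  · rw [genMat_of_lt h, tensorOp_genFactor_conjTranspose h]
  · simp [genMat_of_not_lt h, tensorOp_conjTranspose, TM_conjTranspose]

lemma genMat_anticomm (hi : i < 2 * (n / 2)) (hij : i < j) :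
    genMat n i * genMat n j = -(genMat n j * genMat n i) := by
  by_cases hj : j < 2 * (n / 2)
  · rw [genMat_of_lt hi, genMat_of_lt hj, tensorOp_genFactor_anticomm hi hj hij]
  · simp [genMat_of_lt hi, genMat_of_not_lt hj, tensorOp_genFactor_anticomm_TM hi]

lemma genMat_mul_add_mul (hi : i < n) (hj : j < n) :
    genMat n i * genMat n j + genMat n j * genMat n i = (if i = j then -2 else 0 : ℂ) • 1 := by
  rcases lt_trichotomy i j with h | rfl | h
  · simp [genMat_anticomm (n := n) (by omega) h, h.ne]
  · rw [genMat_mul_self, if_pos rfl]; module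
  · simp [genMat_anticomm (n := n) (by omega) h, h.ne']

lemma vecMat_conjTranspose (X : Rn n) : (vecMat n X)ᴴ = -vecMat n X := by
  simp [vecMat, Matrix.conjTranspose_sum, genMat_conjTranspose, Finset.sum_neg_distrib]

lemma vecMat_mul_add_mul (X Y : Rn n) :
    vecMat n X * vecMat n Y + vecMat n Y * vecMat n X = (-2 * inner ℝ X Y : ℂ) • 1 := by
  calc vecMat n X * vecMat n Y + vecMat n Y * vecMat n X
      = ∑ a : Fin n, ∑ b : Fin n, ((X a : ℂ) * Y b) •
          (genMat n a * genMat n b + genMat n b * genMat n a) := by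
        simp only [vecMat, Finset.sum_mul_sum, smul_mul_smul, smul_add, Finset.sum_add_distrib]
        rw [Finset.sum_comm (f := fun a b => ((Y a : ℂ) * X b) • _)]
        simp only [mul_comm]
    _ = _ := by
        simp_rw [genMat_mul_add_mul (Fin.is_lt _) (Fin.is_lt _), Fin.val_eq_val, smul_smul,
          mul_ite, mul_zero, ite_smul, zero_smul, Finset.sum_ite_eq, Finset.mem_univ, if_true]
        rw [← Finset.sum_smul, real_inner_comm, PiLp.inner_apply]
        simp only [RCLike.inner_apply, conj_trivial, ofReal_sum, ofReal_mul, Finset.mul_sum]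
        exact congrArg (· • _) (Finset.sum_congr rfl fun a _ => by ring)

end Clifford

section Action

variable {r n : ℕ}

lemma actN_mul (M N : Matrix (SpIdx n) (SpIdx n) ℂ) (φ : TwSpinor r n) :
    actN (M * N) φ = actN M (actN N φ) := by
  ext p
  simp only [actN, Matrix.mul_apply, Finset.sum_mul, Finset.mul_sum, mul_assoc]
  exact Finset.sum_comm

lemma actN_one (φ : TwSpinor r n) : actN (1 : Matrix (SpIdx n) (SpIdx n) ℂ) φ = φ := by
  ext p
  simp [actN, Matrix.one_apply]

lemma actN_smul (c : ℂ) (M : Matrix (SpIdx n) (SpIdx n) ℂ) (φ : TwSpinor r n) :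
    actN (c • M) φ = c • actN M φ := by
  ext p
  simp [actN, Finset.mul_sum, mul_assoc]

lemma actN_add (M N : Matrix (SpIdx n) (SpIdx n) ℂ) (φ : TwSpinor r n) :
    actN (M + N) φ = actN M φ + actN N φ := by
  ext p
  simp [actN, add_mul, Finset.sum_add_distrib]

lemma inner_actN_left (M : Matrix (SpIdx n) (SpIdx n) ℂ) (φ ψ : TwSpinor r n) :
    inner ℂ (actN M φ) ψ = inner ℂ φ (actN Mᴴ ψ) := by
  simp only [PiLp.inner_apply, RCLike.inner_apply, actN, Matrix.conjTranspose_apply,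
    map_sum, map_mul, Finset.sum_mul, Finset.mul_sum, Fintype.sum_prod_type]
  refine Finset.sum_congr rfl fun a _ => ?_
  rw [Finset.sum_comm]
  refine Finset.sum_congr rfl fun b _ => Finset.sum_congr rfl fun c _ => ?_
  simp only [RCLike.star_def]
  ring

lemma vecMat_add (X Y : Rn n) : vecMat n (X + Y) = vecMat n X + vecMat n Y := by
  simp [vecMat, add_smul, Finset.sum_add_distrib]

lemma vecMat_smul (a : ℝ) (X : Rn n) : vecMat n (a • X) = (a : ℂ) • vecMat n X := by
  simp only [vecMat, Finset.smul_sum, smul_smul, PiLp.smul_apply, smul_eq_mul, ofReal_mul]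

lemma vecMat_mul_self (X : Rn n) : vecMat n X * vecMat n X = (-(‖X‖ ^ 2 : ℝ) : ℂ) • 1 := by
  have h := vecMat_mul_add_mul X X
  rw [real_inner_self_eq_norm_sq] at h
  apply smul_right_injective _ (two_ne_zero (α := ℂ))
  simp only [two_smul, h, smul_smul]
  push_cast
  ring_nf

lemma norm_actN_vecMat (X : Rn n) (φ : TwSpinor r n) :
    ‖actN (vecMat n X) φ‖ = ‖X‖ * ‖φ‖ := by
  have h : inner ℂ (actN (vecMat n X) φ) (actN (vecMat n X) φ) = ((‖X‖ * ‖φ‖) ^ 2 : ℝ) := by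
    rw [inner_actN_left, vecMat_conjTranspose, ← neg_one_smul ℂ,
      ← actN_mul, smul_mul_assoc, vecMat_mul_self, smul_smul, actN_smul, actN_one,
      inner_smul_right, inner_self_eq_norm_sq_to_K, RCLike.ofReal_eq_complex_ofReal]
    push_cast
    ring
  rw [inner_self_eq_norm_sq_to_K, RCLike.ofReal_eq_complex_ofReal] at h
  exact (sq_eq_sq₀ (norm_nonneg _) (by positivity)).1 (by exact_mod_cast h)

variable (r) in
def cliffordMul (φ : TwSpinor r n) : Rn n →ₗ[ℝ] TwSpinor r n where
  toFun X := actN (vecMat n X) φ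
  map_add' X Y := by rw [vecMat_add, actN_add]
  map_smul' a X := by rw [vecMat_smul, actN_smul]; rfl

end Action

/-- the unique map J^φ is an orthogonal complex structure on V^φ,
and n - r is even. -/
theorem stmt7 (n r : ℕ) (φ : TwSpinor r n) (V : Submodule ℝ (Rn n))
    (hpp : IsPartiallyPure r n φ V) :
    (∃! J : V → V, ∀ X : V,
        actN (vecMat n (X : Rn n)) φ = I • actN (vecMat n ((J X : Rn n))) φ) ∧
    (∀ J : V → V,
      (∀ X : V, actN (vecMat n (X : Rn n)) φ = I • actN (vecMat n ((J X : Rn n))) φ) →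
      (∀ (a : ℝ) (X Y : V), J (a • X + Y) = a • J X + J Y) ∧
      (∀ X : V, J (J X) = -X) ∧
      (∀ X Y : V, (inner ℝ ((J X : Rn n)) ((J Y : Rn n)) : ℝ) = (inner ℝ (X : Rn n) (Y : Rn n) : ℝ))) ∧
    (n - r) % 2 = 0 := by
  let c : V →ₗᵢ[ℝ] TwSpinor r n :=
    { toLinearMap := (cliffordMul r φ).comp V.subtype
      norm_map' X := by simp [cliffordMul, norm_actN_vecMat, hpp.unit_norm] }
  have hconj : ∀ X, ∃ Y, c X = I • c Y := fun X => by
    obtain ⟨Y, hY, h⟩ := hpp.exists_conj X X.2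
    exact ⟨⟨Y, hY⟩, h⟩
  obtain ⟨J, hJ, hJ_unique⟩ := LinearMap.existsUnique_map_eq_I_smul c.injective hconj
  refine ⟨⟨J, hJ, hJ_unique⟩, fun J' hJ' => ⟨?_, ?_, ?_⟩, ?_⟩
  · exact LinearMap.map_smul_add_of_map_eq_I_smul c.injective hJ'
  · exact LinearMap.apply_apply_of_map_eq_I_smul c.injective hJ'
  · exact c.inner_apply_apply_of_map_eq_I_smul hJ'
  · rw [← Nat.even_iff, ← hpp.dim_eq]
    exact LinearMap.even_finrank_of_map_eq_I_smul c.injective hJ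
end
end
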